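/- If f and g are nonnegative, increasing, star-shaped functions on (0,∞) with g(x) > 0 for x > 0, then f ∘ g is star-shaped. -/
import Mathlib


/-- If f and g are nonnegative, increasing, star-shaped functions on (0,∞)
with g positive on (0,∞), then f ∘ g is star-shaped on (0,∞). -/
theorem comp_of_star_shaped_is_star_shaped
    (f g : ℝ → ℝ)
    (hfnonneg : ∀ x, 0 < x → 0 ≤ f x)
    (hgnonneg : ∀ x, 0 < x → 0 ≤ g x)
    (hfmono : MonotoneOn f (Set.Ioi (0:ℝ)))
    (hgmono : MonotoneOn g (Set.Ioi (0:ℝ)))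
    (hfstar : ∀ x y, 0 < x → x ≤ y → f x / x ≤ f y / y)
    (hgstar : ∀ x y, 0 < x → x ≤ y → g x / x ≤ g y / y)
    (hgpos : ∀ x, 0 < x → 0 < g x) :
    ∀ x y, 0 < x → x ≤ y → f (g x) / x ≤ f (g y) / y := by
  intro x y hx hxy
  have hy : 0 < y := lt_of_lt_of_le hx hxy
  have hgx := hgpos x hx
  have hgy := hgpos y hy
  have hgle : g x ≤ g y := hgmono hx hy hxy
  have h1 : f (g x) / g x ≤ f (g y) / g y := hfstar _ _ hgx hgle
  have h2 : g x / x ≤ g y / y := hgstar _ _ hx hxy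
  have key : (f (g x) / g x) * (g x / x) ≤ (f (g y) / g y) * (g y / y) :=
    mul_le_mul h1 h2 (div_nonneg hgx.le hx.le)
      (div_nonneg (hfnonneg _ hgy) hgy.le)
  calc f (g x) / x = (f (g x) / g x) * (g x / x) := by
        field_simp
      _ ≤ (f (g y) / g y) * (g y / y) := key
      _ = f (g y) / y := by field_simp
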